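/- Let A be a closed densely defined operator, B closed with A relatively bounded with respect to B (with relative bound a < 1), 0 isolated in σ(B), and the quasinilpotent part of B at 0 vanishing, with Riesz projection P at 0. Then AP extends to a bounded operator on H. -/
import Mathlib


/-!
STATEMENT 8: Let `A` be closed densely defined, `B` closed with `A` relatively bounded
w.r.t. `B` (relative bound `a < 1`), `0` isolated in `σ(B)` with vanishing
quasinilpotent part and Riesz projection `P`.  Then `AP` extends to a bounded
operator on `H`.
-/

noncomputable def shiftScale {H : Type*} [NormedAddCommGroup H] [InnerProductSpace ℂ H]
    (B : H →ₗ.[ℂ] H) (β : ℝ) (z : ℂ) : H →ₗ.[ℂ] H where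
  domain := B.domain
  toFun := (β : ℂ) • B.toFun - z • B.domain.subtype

def IsBddInverseOn {H : Type*} [NormedAddCommGroup H] [InnerProductSpace ℂ H]
    (T : H →ₗ.[ℂ] H) (R : H →L[ℂ] H) : Prop :=
  (∀ x : H, ∃ hx : R x ∈ T.domain, T ⟨R x, hx⟩ = x) ∧ ∀ y : T.domain, R (T y) = y

theorem AP_extends_to_bounded {H : Type*} [NormedAddCommGroup H]
    [InnerProductSpace ℂ H] [CompleteSpace H]
    (A B : H →ₗ.[ℂ] H) (hAclosed : A.IsClosed) (hAdense : Dense (A.domain : Set H))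
    (hBclosed : B.IsClosed)
    -- relative boundedness of `A` w.r.t. `B`, with relative bound `a < 1`:
    (hsub : B.domain ≤ A.domain)
    (a b : ℝ) (ha0 : 0 ≤ a) (ha : a < 1) (hb : 0 ≤ b)
    (hrel : ∀ ψ : B.domain, ‖A ⟨(ψ : H), hsub ψ.2⟩‖ ≤ a * ‖B ψ‖ + b * ‖(ψ : H)‖)
    -- `0 ∈ σ(B)` isolated:
    (hspec : ¬ ∃ R : H →L[ℂ] H, IsBddInverseOn (shiftScale B 1 0) R)
    (hiso : ∃ ε > (0 : ℝ), ∀ w : ℂ, w ≠ 0 → ‖w‖ < ε →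
      ∃ R : H →L[ℂ] H, IsBddInverseOn (shiftScale B 1 w) R)
    -- `P` is the Riesz projection of `B` at `0`:
    (P : H →L[ℂ] H) (hidem : P ∘L P = P)
    (hPdom : ∀ x : H, P x ∈ B.domain)
    (hcomm : ∀ ψ : B.domain, B ⟨P (ψ : H), hPdom _⟩ = P (B ψ))
    -- `QBQ` boundedly invertible on `QH`:
    (hQinv : ∃ S : H →L[ℂ] H,
      (∀ x : H, ∃ hx : S x ∈ B.domain, P (S x) = 0 ∧ B ⟨S x, hx⟩ = x - P x) ∧
      (∀ ψ : B.domain, S (B ψ) = (ψ : H) - P (ψ : H)))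
    -- vanishing quasinilpotent part:
    (hquasi : ∀ ψ : B.domain, P (B ψ) = 0) :
    ∃ M : ℝ, 0 ≤ M ∧ ∀ x : H, ‖A ⟨P x, hsub (hPdom x)⟩‖ ≤ M * ‖x‖ := by
  obtain ⟨S, h1, h2⟩ := hQinv
  -- B (P x) = 0 for all x
  have key : ∀ x : H, B ⟨P x, hPdom x⟩ = 0 := by
    intro x
    have hS0 : S (B ⟨P x, hPdom x⟩) = 0 := by
      have := h2 ⟨P x, hPdom x⟩
      simp only at this
      have hPP : P (P x) = P x := by
        have := congrArg (fun T : H →L[ℂ] H => T x) hidem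
        simpa using this
      simp [this, hPP]
    obtain ⟨hx, hP0, hBx⟩ := h1 (B ⟨P x, hPdom x⟩)
    have hq : P (B ⟨P x, hPdom x⟩) = 0 := hquasi ⟨P x, hPdom x⟩
    have : B ⟨S (B ⟨P x, hPdom x⟩), hx⟩ = 0 := by
      have hzero : (⟨S (B ⟨P x, hPdom x⟩), hx⟩ : B.domain) = 0 := by
        ext; simpa using hS0
      rw [hzero]; exact B.map_zero
    rw [this] at hBx
    rw [hq, sub_zero] at hBx
    exact hBx.symm
  refine ⟨b * ‖P‖, mul_nonneg hb (norm_nonneg _), fun x => ?_⟩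
  have h := hrel ⟨P x, hPdom x⟩
  rw [key x] at h
  simp only [norm_zero, mul_zero, zero_add] at h
  calc ‖A ⟨P x, hsub (hPdom x)⟩‖ ≤ b * ‖P x‖ := h
    _ ≤ b * (‖P‖ * ‖x‖) := by
        exact mul_le_mul_of_nonneg_left (P.le_opNorm x) hb
    _ = b * ‖P‖ * ‖x‖ := by ring
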